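/- arXiv:1508.00550 — 6 statements merged into one kernel-verified Lean document; each statement's English description precedes it below -/
import Mathlib

section
/- For every α with 0 < α < 1 there is a constant C(α) such that for any bounded measurable function ω supported in [-D, D] with D ≥ 1, ‖ω‖_∞ ≤ 1, and finite Hölder seminorm ‖ω‖_{C^α}, the principal value Hilbert transform satisfies |p.v. ∫ ω(y)/(x−y) dy| ≤ C(α)(1 + log D + log(1 + ‖ω‖_{C^α})) for all x ∈ ℝ. -/
/-!
Write `H = ‖ω‖_{C^α}`, fix the scale `δ = (1 + H)^(-1/α) ≤ 1` and split the truncated integral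
at `|x - y| = δ`. On the annulus `ε < |x - y| ≤ δ` the kernel `1/(x - y)` is odd about `x`, so
`ω y` may be replaced by `ω y - ω x`, and the Hölder bound leaves
`H ∫ |x - y|^(α - 1) ≤ 2 H δ^α / α ≤ 2/α`.
Outside it `|ω| ≤ 1` and the support of `ω` has length `2D`, so the integral is at most
`∫_{r < |x - y| ≤ r + 3D} |x - y|⁻¹ = 2 log (1 + 3D/r)` for some `r ≥ δ`, that is
`O(log D + α⁻¹ log (1 + H))`. The bound is uniform in `ε < δ`, so it passes to the limit.
-/

open MeasureTheory Set Real

/-- Half-open, so that `{y | ε < |x - y|}` is the disjoint union of `annulus x ε δ` and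
`{y | δ < |x - y|}`. -/
def annulus (x a b : ℝ) : Set ℝ := {y | a < |x - y| ∧ |x - y| ≤ b}

lemma measurableSet_annulus (x a b : ℝ) : MeasurableSet (annulus x a b) :=
  (measurable_const.sub measurable_id).abs measurableSet_Ioc

lemma measurableSet_lt_abs_sub (x δ : ℝ) : MeasurableSet {y : ℝ | δ < |x - y|} :=
  (measurable_const.sub measurable_id).abs measurableSet_Ioi

lemma annulus_eq_union {x a b : ℝ} (ha : 0 ≤ a) :
    annulus x a b = Ico (x - b) (x - a) ∪ Ioc (x + a) (x + b) := by
  ext y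
  simp only [annulus, mem_ofPred_eq, mem_union, mem_Ico, mem_Ioc]
  rcases le_total y x with h | h
  · rw [abs_of_nonneg (sub_nonneg.2 h)]
    constructor
    · rintro ⟨h1, h2⟩; left; constructor <;> linarith
    · rintro (⟨h1, h2⟩ | ⟨h1, h2⟩) <;> constructor <;> linarith
  · rw [abs_of_nonpos (sub_nonpos.2 h)]
    constructor
    · rintro ⟨h1, h2⟩; right; constructor <;> linarith
    · rintro (⟨h1, h2⟩ | ⟨h1, h2⟩) <;> constructor <;> linarith

lemma continuousOn_abs_rpow (r : ℝ) : ContinuousOn (fun t : ℝ => |t| ^ r) {0}ᶜ :=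
  continuous_abs.continuousOn.rpow_const fun _ ht => Or.inl (abs_ne_zero.2 ht)

lemma continuousOn_abs_inv : ContinuousOn (fun t : ℝ => |t|⁻¹) {0}ᶜ :=
  continuousOn_inv₀.comp continuous_abs.continuousOn fun _ ht => abs_ne_zero.2 ht

lemma integrableOn_annulus_comp_sub {g : ℝ → ℝ} {a : ℝ} (x b : ℝ) (ha : 0 < a)
    (hg : ContinuousOn g {0}ᶜ) : IntegrableOn (fun y => g (x - y)) (annulus x a b) := by
  have hK : IntegrableOn (fun y => g (x - y)) (Icc (x - b) (x - a) ∪ Icc (x + a) (x + b)) := by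
    refine ContinuousOn.integrableOn_compact (isCompact_Icc.union isCompact_Icc)
      (hg.comp (continuousOn_const.sub continuousOn_id) ?_)
    rintro y (⟨-, hy⟩ | ⟨hy, -⟩) <;> simp only [mem_compl_iff, mem_singleton_iff] <;> linarith
  rw [annulus_eq_union ha.le]
  exact hK.mono_set (union_subset_union Ico_subset_Icc_self Ioc_subset_Icc_self)

theorem setIntegral_annulus_comp_sub {g : ℝ → ℝ} {a b : ℝ} (x : ℝ) (ha : 0 < a) (hab : a ≤ b)
    (hg : ContinuousOn g {0}ᶜ) :
    ∫ y in annulus x a b, g (x - y) = ∫ t in a..b, (g t + g (-t)) := by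
  have hpos : ∀ t ∈ uIcc a b, t ≠ 0 := fun t ht =>
    (ha.trans_le (uIcc_of_le hab ▸ ht).1).ne'
  have h_left : ∫ y in Ico (x - b) (x - a), g (x - y) = ∫ t in a..b, g t := by
    rw [integral_Ico_eq_integral_Ioo, ← integral_Ioc_eq_integral_Ioo,
      ← intervalIntegral.integral_of_le (by linarith), intervalIntegral.integral_comp_sub_left,
      sub_sub_cancel, sub_sub_cancel]
  have h_right : ∫ y in Ioc (x + a) (x + b), g (x - y) = ∫ t in a..b, g (-t) := by
    rw [← intervalIntegral.integral_of_le (by linarith), intervalIntegral.integral_comp_sub_left,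
      intervalIntegral.integral_comp_neg, sub_add_cancel_left, sub_add_cancel_left]
  have hint := integrableOn_annulus_comp_sub x b ha hg
  rw [annulus_eq_union ha.le] at hint ⊢
  rw [setIntegral_union (disjoint_left.2 fun y h1 h2 => by linarith [h1.2, h2.1])
      measurableSet_Ioc (hint.mono_set subset_union_left) (hint.mono_set subset_union_right),
    h_left, h_right]
  exact (intervalIntegral.integral_add (hg.mono fun t ht => hpos t ht).intervalIntegrable
    (hg.comp continuousOn_neg fun t ht => neg_ne_zero.2 (hpos t ht)).intervalIntegrable).symm

lemma setIntegral_annulus_inv_sub {x a b : ℝ} (ha : 0 < a) (hab : a ≤ b) :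
    ∫ y in annulus x a b, (x - y)⁻¹ = 0 := by
  rw [setIntegral_annulus_comp_sub (g := fun t => t⁻¹) x ha hab continuousOn_inv₀]
  simp

lemma setIntegral_annulus_abs_rpow {x a b r : ℝ} (ha : 0 < a) (hab : a ≤ b) (hr : -1 < r) :
    ∫ y in annulus x a b, |x - y| ^ r = 2 * ((b ^ (r + 1) - a ^ (r + 1)) / (r + 1)) := by
  rw [setIntegral_annulus_comp_sub x ha hab (continuousOn_abs_rpow r),
    intervalIntegral.integral_congr (g := fun t => 2 * t ^ r) fun t ht => by
      simp only [abs_neg, abs_of_pos (ha.trans_le (uIcc_of_le hab ▸ ht).1)]; ring,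
    intervalIntegral.integral_const_mul, integral_rpow (Or.inl hr)]

lemma setIntegral_annulus_abs_inv {x a b : ℝ} (ha : 0 < a) (hab : a ≤ b) :
    ∫ y in annulus x a b, |x - y|⁻¹ = 2 * log (b / a) := by
  rw [setIntegral_annulus_comp_sub x ha hab continuousOn_abs_inv,
    intervalIntegral.integral_congr (g := fun t => 2 * t⁻¹) fun t ht => by
      simp only [abs_neg, abs_of_pos (ha.trans_le (uIcc_of_le hab ▸ ht).1)]; ring,
    intervalIntegral.integral_const_mul, integral_inv]
  exact fun h => (lt_irrefl 0) (ha.trans_le (uIcc_of_le hab ▸ h).1)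

lemma integrableOn_annulus_abs_inv (x b : ℝ) {a : ℝ} (ha : 0 < a) :
    IntegrableOn (fun y => |x - y|⁻¹) (annulus x a b) :=
  integrableOn_annulus_comp_sub x b ha continuousOn_abs_inv

theorem abs_setIntegral_annulus_div_sub_le {ω : ℝ → ℝ} {x α H ε δ : ℝ} (hα : 0 < α) (hH : 0 ≤ H)
    (hε : 0 < ε) (hεδ : ε ≤ δ) (hω : Measurable ω)
    (hHol : ∀ y ∈ annulus x ε δ, |ω y - ω x| ≤ H * |x - y| ^ α) :
    |∫ y in annulus x ε δ, ω y / (x - y)| ≤ 2 * H * δ ^ α / α := by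
  have hA := measurableSet_annulus x ε δ
  have hdist : ∀ y ∈ annulus x ε δ, 0 < |x - y| := fun y hy => hε.trans hy.1
  have hdom : ∀ y ∈ annulus x ε δ, ‖(ω y - ω x) / (x - y)‖ ≤ H * |x - y| ^ (α - 1) := by
    intro y hy
    rw [Real.norm_eq_abs, abs_div, rpow_sub (hdist y hy), rpow_one, mul_div_assoc']
    exact div_le_div_of_nonneg_right (hHol y hy) (abs_nonneg _)
  have hint_dom : IntegrableOn (fun y => H * |x - y| ^ (α - 1)) (annulus x ε δ) :=
    (integrableOn_annulus_comp_sub x δ hε (continuousOn_abs_rpow (α - 1))).const_mul H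
  have hint_diff : IntegrableOn (fun y => (ω y - ω x) / (x - y)) (annulus x ε δ) :=
    hint_dom.mono' ((hω.sub_const _).div (measurable_const.sub measurable_id)).aestronglyMeasurable
      (ae_restrict_of_forall_mem hA hdom)
  have hcancel :
      ∫ y in annulus x ε δ, ω y / (x - y) = ∫ y in annulus x ε δ, (ω y - ω x) / (x - y) := by
    calc ∫ y in annulus x ε δ, ω y / (x - y)
        = ∫ y in annulus x ε δ, ((ω y - ω x) / (x - y) + ω x * (x - y)⁻¹) :=
          setIntegral_congr_fun hA fun y hy => by
            have := abs_pos.1 (hdist y hy)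
            field_simp
            ring
      _ = ∫ y in annulus x ε δ, (ω y - ω x) / (x - y) := by
          rw [integral_add hint_diff ((integrableOn_annulus_comp_sub (g := fun t => t⁻¹) x δ hε
              continuousOn_inv₀).const_mul (ω x)), integral_const_mul,
            setIntegral_annulus_inv_sub hε hεδ, mul_zero, add_zero]
  calc |∫ y in annulus x ε δ, ω y / (x - y)|
      ≤ ∫ y in annulus x ε δ, H * |x - y| ^ (α - 1) := by
        rw [hcancel]
        exact norm_integral_le_of_norm_le hint_dom (ae_restrict_of_forall_mem hA hdom)
    _ = 2 * H * (δ ^ α - ε ^ α) / α := by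
        rw [integral_const_mul, setIntegral_annulus_abs_rpow hε hεδ (by linarith), sub_add_cancel]
        ring
    _ ≤ 2 * H * δ ^ α / α := by
        gcongr
        exact sub_le_self _ (rpow_nonneg hε.le α)

lemma norm_div_sub_le_abs_inv {ω : ℝ → ℝ} (hbdd : ∀ y, |ω y| ≤ 1) (x y : ℝ) :
    ‖ω y / (x - y)‖ ≤ |x - y|⁻¹ := by
  rw [Real.norm_eq_abs, abs_div, div_eq_mul_inv]
  exact mul_le_of_le_one_left (inv_nonneg.2 (abs_nonneg _)) (hbdd y)

lemma integrableOn_annulus_div_sub {ω : ℝ → ℝ} {x a : ℝ} (b : ℝ) (ha : 0 < a)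
    (hω : Measurable ω) (hbdd : ∀ y, |ω y| ≤ 1) :
    IntegrableOn (fun y => ω y / (x - y)) (annulus x a b) :=
  (integrableOn_annulus_abs_inv x b ha).mono'
    (hω.div (measurable_const.sub measurable_id)).aestronglyMeasurable
    (ae_of_all _ (norm_div_sub_le_abs_inv hbdd x))

/-- The inner radius uses `|x| - 2D`: the support only gives `|x| - D ≤ |x - y|`, whereas
membership in the annulus needs a strict inequality. -/
lemma mem_annulus_of_abs_le {x y D δ : ℝ} (hD : 0 < D) (hδ : δ < |x - y|) (hy : |y| ≤ D) :
    y ∈ annulus x (max δ (|x| - 2 * D)) (max δ (|x| - 2 * D) + 3 * D) := by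
  have h1 := abs_sub_abs_le_abs_sub x y
  have h2 := abs_sub x y
  exact ⟨max_lt hδ (by linarith), by linarith [le_max_right δ (|x| - 2 * D)]⟩

theorem integrableOn_and_abs_setIntegral_far_le {ω : ℝ → ℝ} {x D δ : ℝ} (hD : 0 < D)
    (hδ : 0 < δ) (hω : Measurable ω) (hsupp : ∀ y, ω y ≠ 0 → y ∈ Icc (-D) D)
    (hbdd : ∀ y, |ω y| ≤ 1) :
    IntegrableOn (fun y => ω y / (x - y)) {y | δ < |x - y|} ∧
      |∫ y in {y | δ < |x - y|}, ω y / (x - y)| ≤ 2 * log (1 + 3 * D / δ) := by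
  set r := max δ (|x| - 2 * D)
  have hr : 0 < r := hδ.trans_le (le_max_left _ _)
  have hF := measurableSet_lt_abs_sub x δ
  have hsub : annulus x r (r + 3 * D) ⊆ {y | δ < |x - y|} :=
    fun y hy => (le_max_left _ _).trans_lt hy.1
  have hzero : ∀ y ∈ {y | δ < |x - y|} \ annulus x r (r + 3 * D), ω y / (x - y) = 0 := by
    rintro y ⟨hy, hyA⟩
    have : ω y = 0 := by
      by_contra h
      exact hyA (mem_annulus_of_abs_le hD hy (abs_le.2 (hsupp y h)))
    rw [this, zero_div]
  refine ⟨(integrableOn_annulus_div_sub _ hr hω hbdd).of_forall_sdiff_eq_zero hF hzero, ?_⟩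
  rw [setIntegral_eq_of_subset_of_forall_sdiff_eq_zero hF hsub hzero]
  calc |∫ y in annulus x r (r + 3 * D), ω y / (x - y)|
      ≤ ∫ y in annulus x r (r + 3 * D), |x - y|⁻¹ :=
        norm_integral_le_of_norm_le (integrableOn_annulus_abs_inv x _ hr)
          (ae_of_all _ (norm_div_sub_le_abs_inv hbdd x))
    _ = 2 * log (1 + 3 * D / r) := by
        rw [setIntegral_annulus_abs_inv hr (by linarith), add_div, div_self hr.ne']
    _ ≤ 2 * log (1 + 3 * D / δ) := by
        gcongr
        exact le_max_left _ _

lemma setIntegral_lt_abs_sub_eq_add {f : ℝ → ℝ} {x ε δ : ℝ} (hεδ : ε ≤ δ)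
    (hnear : IntegrableOn f (annulus x ε δ)) (hfar : IntegrableOn f {y | δ < |x - y|}) :
    ∫ y in {y | ε < |x - y|}, f y
      = (∫ y in annulus x ε δ, f y) + ∫ y in {y | δ < |x - y|}, f y := by
  have hunion : {y | ε < |x - y|} = annulus x ε δ ∪ {y | δ < |x - y|} := by
    ext y
    simp only [annulus, mem_ofPred_eq, mem_union]
    constructor
    · intro h
      exact (le_or_gt |x - y| δ).imp (fun h' => ⟨h, h'⟩) id
    · rintro (h | h)
      exacts [h.1, hεδ.trans_lt h]
  rw [hunion]
  exact setIntegral_union (disjoint_left.2 fun y h1 h2 => not_lt.2 h1.2 h2)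
    (measurableSet_lt_abs_sub x δ) hnear hfar

theorem abs_setIntegral_lt_abs_sub_div_sub_le {ω : ℝ → ℝ} {x α H D ε δ : ℝ} (hα : 0 < α)
    (hH : 0 ≤ H) (hD : 0 < D) (hε : 0 < ε) (hεδ : ε ≤ δ) (hδ1 : δ ≤ 1) (hω : Measurable ω)
    (hsupp : ∀ y, ω y ≠ 0 → y ∈ Icc (-D) D) (hbdd : ∀ y, |ω y| ≤ 1)
    (hHol : ∀ a b : ℝ, 0 < |a - b| → |a - b| ≤ 1 → |ω a - ω b| ≤ H * |a - b| ^ α) :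
    |∫ y in {y | ε < |x - y|}, ω y / (x - y)|
      ≤ 2 * H * δ ^ α / α + 2 * log (1 + 3 * D / δ) := by
  obtain ⟨hfar_int, hfar⟩ :=
    integrableOn_and_abs_setIntegral_far_le (x := x) hD (hε.trans_le hεδ) hω hsupp hbdd
  have hnear := abs_setIntegral_annulus_div_sub_le (x := x) hα hH hε hεδ hω
    fun y ⟨hy1, hy2⟩ => by
      rw [abs_sub_comm x y] at hy1 hy2 ⊢
      exact hHol y x (hε.trans hy1) (hy2.trans hδ1)
  rw [setIntegral_lt_abs_sub_eq_add hεδ (integrableOn_annulus_div_sub δ hε hω hbdd) hfar_int]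
  exact (abs_add_le _ _).trans (add_le_add hnear hfar)

lemma log_four_le_two : log 4 ≤ 2 := by
  rw [show (4 : ℝ) = 2 ^ 2 by norm_num, log_pow, Nat.cast_ofNat]
  linarith [log_le_sub_one_of_pos two_pos]

noncomputable def holderScale (α H : ℝ) : ℝ := (1 + H) ^ (-α⁻¹)

section holderScale

variable {α H : ℝ}

lemma holderScale_pos (α : ℝ) (hH : 0 ≤ H) : 0 < holderScale α H :=
  rpow_pos_of_pos (by linarith) _

lemma holderScale_le_one (hα : 0 < α) (hH : 0 ≤ H) : holderScale α H ≤ 1 :=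
  rpow_le_one_of_one_le_of_nonpos (by linarith) (by simp [hα.le])

lemma mul_holderScale_rpow_le_one (hα : 0 < α) (hH : 0 ≤ H) : H * holderScale α H ^ α ≤ 1 := by
  rw [holderScale, ← rpow_mul (by linarith), neg_mul, inv_mul_cancel₀ hα.ne', rpow_neg_one]
  exact mul_inv_le_one_of_le₀ (by linarith) (by linarith)

lemma log_holderScale (α : ℝ) (hH : 0 ≤ H) :
    log (holderScale α H) = -α⁻¹ * log (1 + H) :=
  log_rpow (by linarith) _

lemma log_one_add_div_holderScale_le {D : ℝ} (hα : 0 < α) (hH : 0 ≤ H) (hD : 1 ≤ D) :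
    log (1 + 3 * D / holderScale α H) ≤ 2 + log D + α⁻¹ * log (1 + H) := by
  have hδ := holderScale_pos α hH
  calc log (1 + 3 * D / holderScale α H) ≤ log (4 * D / holderScale α H) := by
        gcongr
        rw [add_div' _ _ _ hδ.ne', div_le_div_iff_of_pos_right hδ]
        linarith [holderScale_le_one hα hH]
    _ = log 4 + log D - log (holderScale α H) := by
        rw [log_div (by positivity) hδ.ne', log_mul (by norm_num) (by positivity)]
    _ ≤ 2 + log D + α⁻¹ * log (1 + H) := by
        rw [log_holderScale α hH]
        linarith [log_four_le_two]

theorem abs_setIntegral_lt_abs_sub_div_sub_le_log {ω : ℝ → ℝ} {x D ε : ℝ} (hα : 0 < α)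
    (hH : 0 ≤ H) (hD : 1 ≤ D) (hε : ε ∈ Ioo 0 (holderScale α H)) (hω : Measurable ω)
    (hsupp : ∀ y, ω y ≠ 0 → y ∈ Icc (-D) D) (hbdd : ∀ y, |ω y| ≤ 1)
    (hHol : ∀ a b : ℝ, 0 < |a - b| → |a - b| ≤ 1 → |ω a - ω b| ≤ H * |a - b| ^ α) :
    |∫ y in {y | ε < |x - y|}, ω y / (x - y)|
      ≤ 2 / α + 2 * (2 + log D + α⁻¹ * log (1 + H)) := by
  have hnear : 2 * H * holderScale α H ^ α / α ≤ 2 / α := by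
    rw [mul_assoc]
    gcongr
    exact mul_le_of_le_one_right zero_le_two (mul_holderScale_rpow_le_one hα hH)
  exact (abs_setIntegral_lt_abs_sub_div_sub_le hα hH (by linarith) hε.1 hε.2.le
    (holderScale_le_one hα hH) hω hsupp hbdd hHol).trans
    (add_le_add hnear
      (mul_le_mul_of_nonneg_left (log_one_add_div_holderScale_le hα hH hD) zero_le_two))

end holderScale

theorem hilbert_transform_log_bound_general (α : ℝ) (hα : 0 < α) :
    ∃ C : ℝ, 0 < C ∧
      ∀ (ω : ℝ → ℝ) (D Hnorm x I : ℝ),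
        Measurable ω → 1 ≤ D →
        (∀ y, ω y ≠ 0 → y ∈ Icc (-D) D) →
        (∀ y, |ω y| ≤ 1) →
        0 ≤ Hnorm →
        (∀ a b : ℝ, 0 < |a - b| → |a - b| ≤ 1 → |ω a - ω b| ≤ Hnorm * |a - b| ^ α) →
        Filter.Tendsto (fun ε : ℝ => ∫ y in {y : ℝ | ε < |x - y|}, ω y / (x - y))
          (nhdsWithin 0 (Ioi 0)) (nhds I) →
        |I| ≤ C * (1 + Real.log D + Real.log (1 + Hnorm)) := by
  refine ⟨4 + 2 / α, by positivity, ?_⟩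
  intro ω D Hnorm x I hω hD hsupp hbdd hH hHol hI
  have hI_le : |I| ≤ 2 / α + 2 * (2 + log D + α⁻¹ * log (1 + Hnorm)) :=
    le_of_tendsto hI.abs (Filter.eventually_of_mem (Ioo_mem_nhdsGT (holderScale_pos α hH))
      fun ε hε => abs_setIntegral_lt_abs_sub_div_sub_le_log hα hH hD hε hω hsupp hbdd hHol)
  have hlogD := log_nonneg hD
  have hlogH := log_nonneg (by linarith : 1 ≤ 1 + Hnorm)
  rw [div_eq_mul_inv] at hI_le ⊢
  nlinarith [mul_nonneg (inv_pos.2 hα).le hlogD]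

/-- Log-type bound on the principal value Hilbert transform of a bounded,
compactly supported Hölder function. -/
theorem hilbert_transform_log_bound (α : ℝ) (hα : 0 < α) (hα1 : α < 1) :
    ∃ C : ℝ, 0 < C ∧
      ∀ (ω : ℝ → ℝ) (D Hnorm x I : ℝ),
        Measurable ω → 1 ≤ D →
        (∀ y, ω y ≠ 0 → y ∈ Icc (-D) D) →
        (∀ y, |ω y| ≤ 1) →
        0 ≤ Hnorm →
        (∀ a b : ℝ, 0 < |a - b| → |a - b| ≤ 1 → |ω a - ω b| ≤ Hnorm * |a - b| ^ α) →
        Filter.Tendsto (fun ε : ℝ => ∫ y in {y : ℝ | ε < |x - y|}, ω y / (x - y))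
          (nhdsWithin 0 (Ioi 0)) (nhds I) →
        |I| ≤ C * (1 + Real.log D + Real.log (1 + Hnorm)) :=
  hilbert_transform_log_bound_general α hα
end

section
/- For an odd function ω ∈ L^∞(ℝ) with compact support, the function u(x) = ∫_ℝ log|x−y| ω(y) dy satisfies, for every x > 0, u(x) = −x ∫_0^∞ K(x/y) (ω(y)/y) dy, where K(s) = (1/s) log|(s+1)/(s−1)|. -/
open MeasureTheory Set

/-- `Real.log` is interval integrable on every interval. -/
lemma log_intervalIntegrable (a b : ℝ) :
    IntervalIntegrable Real.log MeasureTheory.volume a b := by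
  suffices h : ∀ c : ℝ, IntervalIntegrable Real.log MeasureTheory.volume 0 c by
    exact (h a).symm.trans (h b)
  have h0 : ∀ c : ℝ, 0 ≤ c → IntervalIntegrable Real.log MeasureTheory.volume 0 c := by
    intro c hc
    rw [intervalIntegrable_iff, uIoc_of_le hc]
    have hbound : IntegrableOn (fun x : ℝ => 2 * x ^ (-(1:ℝ)/2) + x) (Ioc 0 c) := by
      have h1 : IntegrableOn (fun x : ℝ => x ^ (-(1:ℝ)/2)) (Ioc 0 c) :=
        (intervalIntegral.intervalIntegrable_rpow' (by norm_num) (a := 0) (b := c)).1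
      have h2 : IntegrableOn (fun x : ℝ => x) (Ioc 0 c) :=
        ((continuous_id.intervalIntegrable (μ := MeasureTheory.volume) 0 c)).1
      exact (h1.const_mul 2).add h2
    refine hbound.mono' Real.measurable_log.aestronglyMeasurable ?_
    filter_upwards [MeasureTheory.ae_restrict_mem measurableSet_Ioc] with x hx
    have hx0 : 0 < x := hx.1
    have hrpow : 0 ≤ x ^ (-(1:ℝ)/2) := Real.rpow_nonneg hx0.le _
    rcases le_total x 1 with h1 | h1
    · have hlog : Real.log x ≤ 0 := Real.log_nonpos hx0.le h1
      have key : -Real.log x ≤ 2 * x ^ (-(1:ℝ)/2) := by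
        have h5 : Real.log (x ^ (-(1:ℝ)/2)) ≤ x ^ (-(1:ℝ)/2) := by
          nlinarith [Real.log_le_sub_one_of_pos (Real.rpow_pos_of_pos hx0 (-(1:ℝ)/2))]
        rw [Real.log_rpow hx0] at h5
        linarith
      rw [Real.norm_eq_abs, abs_of_nonpos hlog]
      linarith [hx0.le]
    · have hlog : 0 ≤ Real.log x := Real.log_nonneg h1
      have : Real.log x ≤ x := by
        nlinarith [Real.log_le_sub_one_of_pos hx0]
      rw [Real.norm_eq_abs, abs_of_nonneg hlog]
      linarith
  intro c
  rcases le_total 0 c with hc | hc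
  · exact h0 c hc
  · rw [IntervalIntegrable.iff_comp_neg]
    have heq : (fun x : ℝ => Real.log (-x)) = Real.log := by
      funext x; exact Real.log_neg_eq_log x
    rw [heq, neg_zero]
    exact h0 (-c) (by linarith)

/-- Integrability of `log |a - y| * ω y` for bounded measurable compactly supported `ω`. -/
lemma log_mul_integrable (ω : ℝ → ℝ) (hm : Measurable ω)
    (hcs : HasCompactSupport ω) (hb : ∃ B, ∀ y, |ω y| ≤ B) (a : ℝ) :
    MeasureTheory.Integrable (fun y => Real.log |a - y| * ω y) := by
  obtain ⟨B, hB⟩ := hb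
  obtain ⟨M₀, hM₀⟩ := hcs.isCompact.isBounded.subset_closedBall 0
  set M : ℝ := max M₀ 0 with hMdef
  have hM : tsupport ω ⊆ Icc (-M) M := by
    intro y hy
    have := hM₀ hy
    rw [Real.closedBall_eq_Icc, zero_sub, zero_add] at this
    exact ⟨le_trans (neg_le_neg (le_max_left _ _)) this.1,
      le_trans this.2 (le_max_left _ _)⟩
  have hMnn : (0:ℝ) ≤ M := le_max_right _ _
  have hmeas : Measurable fun y => Real.log |a - y| * ω y :=
    ((Real.measurable_log.comp ((measurable_const.sub measurable_id).abs))).mul hm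
  have hzero : ∀ y ∉ Icc (-M) M, Real.log |a - y| * ω y = 0 := by
    intro y hy
    have : ω y = 0 := by
      by_contra h
      exact hy (hM (subset_tsupport ω (by simpa [Function.mem_support] using h)))
    simp [this]
  have heq : (fun y => Real.log |a - y| * ω y)
      = (Icc (-M) M).indicator (fun y => Real.log |a - y| * ω y) := by
    funext y
    by_cases hy : y ∈ Icc (-M) M
    · rw [Set.indicator_of_mem hy]
    · rw [Set.indicator_of_notMem hy, hzero y hy]
  rw [heq, MeasureTheory.integrable_indicator_iff measurableSet_Icc]
  -- log (a - y) is integrable on the interval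
  have hlog : IntegrableOn (fun y => Real.log (a - y)) (Icc (-M) M) := by
    have h1 : IntervalIntegrable (fun y => Real.log (a - y)) MeasureTheory.volume
        (a - (a + M)) (a - (a - M)) :=
      (log_intervalIntegrable (a + M) (a - M)).comp_sub_left a
    have h2 : a - (a + M) = -M := by ring
    have h3 : a - (a - M) = M := by ring
    rw [h2, h3] at h1
    exact (integrableOn_Icc_iff_integrableOn_Ioc).2 h1.1
  have hBnn : 0 ≤ B := le_trans (abs_nonneg _) (hB 0)
  refine ((hlog.norm.const_mul B).mono' hmeas.aestronglyMeasurable ?_)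
  filter_upwards [MeasureTheory.ae_restrict_mem measurableSet_Icc] with y _
  have h5 : Real.log |a - y| = Real.log (a - y) := Real.log_abs _
  rw [Real.norm_eq_abs, h5, abs_mul, Real.norm_eq_abs]
  calc |Real.log (a - y)| * |ω y| ≤ |Real.log (a - y)| * B :=
        mul_le_mul_of_nonneg_left (hB y) (abs_nonneg _)
    _ = B * |Real.log (a - y)| := mul_comm _ _

/-- The kernel of the odd-symmetrized logarithmic Biot–Savart law. -/
noncomputable def eulerK (s : ℝ) : ℝ := (1 / s) * Real.log |(s + 1) / (s - 1)|

/-- Odd-symmetrized form of the logarithmic Biot–Savart law. -/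
theorem odd_biot_savart_log (ω : ℝ → ℝ) (hm : Measurable ω)
    (hodd : ∀ y, ω (-y) = -ω y) (hcs : HasCompactSupport ω)
    (hb : ∃ B, ∀ y, |ω y| ≤ B) :
    ∀ x : ℝ, 0 < x →
      (∫ y, Real.log |x - y| * ω y) =
        -x * ∫ y in Ioi (0:ℝ), eulerK (x / y) * (ω y / y) := by
  intro x hx
  set f : ℝ → ℝ := fun y => Real.log |x - y| * ω y with hf
  set g : ℝ → ℝ := fun y => Real.log |x + y| * ω y with hg
  have If : MeasureTheory.Integrable f := log_mul_integrable ω hm hcs hb x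
  have Ig : MeasureTheory.Integrable g := by
    have heq : g = fun y => -(f (-y)) := by
      funext y
      simp only [hf, hg]
      rw [hodd y, show x - -y = x + y by ring]
      ring
    rw [heq]
    exact (If.comp_neg).neg
  -- split the integral
  have hsplit : (∫ y, f y) = (∫ y in Iic (0:ℝ), f y) + ∫ y in Ioi (0:ℝ), f y :=
    (intervalIntegral.integral_Iic_add_Ioi If.integrableOn If.integrableOn).symm
  have hneg : (∫ y in Iic (0:ℝ), f y) = ∫ y in Ioi (0:ℝ), f (-y) := by
    have := integral_comp_neg_Iic (0:ℝ) (fun y => f (-y))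
    simp only [neg_neg, neg_zero] at this
    exact this
  have hfneg : ∀ y : ℝ, f (-y) = -(g y) := by
    intro y
    simp only [hf, hg]
    rw [hodd y, show x - -y = x + y by ring]
    ring
  have hLHS : (∫ y, f y) = ∫ y in Ioi (0:ℝ), (f y - g y) := by
    rw [hsplit, hneg]
    have h1 : (∫ y in Ioi (0:ℝ), f (-y)) = ∫ y in Ioi (0:ℝ), -(g y) := by
      refine MeasureTheory.setIntegral_congr_fun measurableSet_Ioi (fun y _ => hfneg y)
    have h2 : (∫ y in Ioi (0:ℝ), (f y - g y)) =
        (∫ y in Ioi (0:ℝ), f y) - ∫ y in Ioi (0:ℝ), g y :=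
      MeasureTheory.integral_sub If.integrableOn Ig.integrableOn
    rw [h1, MeasureTheory.integral_neg, h2]
    ring
  rw [hLHS]
  -- now the right-hand side
  rw [show -x * (∫ y in Ioi (0:ℝ), eulerK (x / y) * (ω y / y))
      = ∫ y in Ioi (0:ℝ), -x * (eulerK (x / y) * (ω y / y)) from
    (MeasureTheory.integral_const_mul (-x) _).symm]
  -- a.e. equality of integrands on Ioi 0
  have hae : ∀ᵐ y : ℝ, y ≠ x := by
    rw [MeasureTheory.ae_iff]
    simpa using MeasureTheory.measure_singleton x
  refine MeasureTheory.setIntegral_congr_ae measurableSet_Ioi ?_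
  filter_upwards [hae] with y hyx hy
  have hy0 : 0 < y := hy
  have hxy : x - y ≠ 0 := sub_ne_zero.2 (fun h => hyx (h.symm))
  have hxy' : x + y ≠ 0 := by positivity
  simp only [hf, hg, eulerK]
  have hs : x / y + 1 = (x + y) / y := by field_simp
  have hs' : x / y - 1 = (x - y) / y := by field_simp
  have hy0' : y ≠ 0 := ne_of_gt hy0
  have harg : (x + y) / y / ((x - y) / y) = (x + y) / (x - y) := by
    rw [div_div_div_comm, div_self hy0', div_one]
  rw [hs, hs', harg]
  rw [Real.log_abs (x - y), Real.log_abs (x + y), Real.log_abs ((x + y) / (x - y)),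
    Real.log_div hxy' hxy]
  field_simp
  ring
end

section
/- The function K(s) = (1/s) log|(s+1)/(s−1)| defined for s > 0, s ≠ 1, is positive, strictly increasing on (0,1), and strictly decreasing on (1,∞). -/
/-!
On `(0,1)`, `K(s) = s⁻¹ (log (1 + s) - log (1 - s)) = ∑ₖ 2 (s²)ᵏ / (2k + 1)` is a power series in
`s²` with positive coefficients, so it is at least `2` and strictly increasing.
Replacing `s` by `s⁻¹` leaves `|(s + 1)/(s - 1)|` unchanged, whence `K(s) = s⁻² K(s⁻¹)`: on `(1,∞)`,
`K` is the increasing positive function `t ↦ t² K(t)` on `(0,1)` composed with the decreasing `s ↦ s⁻¹`.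
-/

open Set

theorem eulerK_eq_log_sub_log {x : ℝ} (hx : |x| < 1) :
    eulerK x = x⁻¹ * (Real.log (1 + x) - Real.log (1 - x)) := by
  obtain ⟨hlo, hhi⟩ := abs_lt.mp hx
  have hquot : |(x + 1) / (x - 1)| = (1 + x) / (1 - x) := by
    rw [abs_div, abs_of_pos (by linarith), abs_of_neg (by linarith)]
    ring
  rw [eulerK, hquot, Real.log_div (by linarith) (by linarith), one_div]

theorem hasSum_eulerK {x : ℝ} (hx : |x| < 1) (hx0 : x ≠ 0) :
    HasSum (fun k : ℕ => 2 * (x ^ 2) ^ k / (2 * k + 1)) (eulerK x) := by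
  rw [eulerK_eq_log_sub_log hx]
  have hterm (k : ℕ) :
      x⁻¹ * (2 * (1 / (2 * k + 1)) * x ^ (2 * k + 1)) = 2 * (x ^ 2) ^ k / (2 * k + 1) := by
    rw [pow_succ, pow_mul]
    field_simp
  simpa only [hterm] using (Real.hasSum_log_sub_log_of_abs_lt_one hx).mul_left x⁻¹

theorem two_le_eulerK {x : ℝ} (hx : |x| < 1) (hx0 : x ≠ 0) : 2 ≤ eulerK x := by
  simpa using le_hasSum (hasSum_eulerK hx hx0) 0 fun k _ => by positivity

theorem eulerK_eq_inv_sq_mul_eulerK_inv (s : ℝ) : eulerK s = s⁻¹ ^ 2 * eulerK s⁻¹ := by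
  rcases eq_or_ne s 0 with rfl | hs
  · simp [eulerK]
  have hquot : (s⁻¹ + 1) / (s⁻¹ - 1) = -((s + 1) / (s - 1)) := by
    rcases eq_or_ne s 1 with rfl | hs1
    · norm_num
    field_simp
    ring
  rw [eulerK, eulerK, hquot, abs_neg]
  field_simp

theorem abs_lt_one_of_mem_Ioo {x : ℝ} (hx : x ∈ Ioo 0 1) : |x| < 1 := by
  rw [abs_of_pos hx.1]
  exact hx.2

theorem inv_mem_Ioo_of_one_lt {s : ℝ} (hs : 1 < s) : s⁻¹ ∈ Ioo 0 1 :=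
  ⟨inv_pos.2 (zero_lt_one.trans hs), inv_lt_one_of_one_lt₀ hs⟩

theorem eulerK_pos_of_mem_Ioo {x : ℝ} (hx : x ∈ Ioo 0 1) : 0 < eulerK x :=
  two_pos.trans_le (two_le_eulerK (abs_lt_one_of_mem_Ioo hx) hx.1.ne')

theorem strictMonoOn_eulerK : StrictMonoOn eulerK (Ioo 0 1) := by
  intro x hx y hy hxy
  have hsq : x ^ 2 < y ^ 2 := by gcongr; exact hx.1.le
  refine hasSum_lt (i := 1) (fun k => ?_) ?_ (hasSum_eulerK (abs_lt_one_of_mem_Ioo hx) hx.1.ne')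
    (hasSum_eulerK (abs_lt_one_of_mem_Ioo hy) hy.1.ne')
  · gcongr
  · simp only [pow_one]
    gcongr

theorem strictMonoOn_sq_mul_eulerK : StrictMonoOn (fun t => t ^ 2 * eulerK t) (Ioo 0 1) := by
  intro x hx y hy hxy
  have hsq : x ^ 2 < y ^ 2 := by gcongr; exact hx.1.le
  exact mul_lt_mul'' hsq (strictMonoOn_eulerK hx hy hxy) (sq_nonneg x) (eulerK_pos_of_mem_Ioo hx).le

/-- `K` is positive, strictly increasing on `(0,1)` and strictly decreasing on `(1,∞)`. -/
theorem eulerK_monotonicity :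
    (∀ s : ℝ, 0 < s → s ≠ 1 → 0 < eulerK s) ∧
      StrictMonoOn eulerK (Ioo 0 1) ∧ StrictAntiOn eulerK (Ioi 1) := by
  refine ⟨fun s hs hs1 => ?_, strictMonoOn_eulerK, fun a ha b hb hab => ?_⟩
  · rcases hs1.lt_or_gt with hlt | hgt
    · exact eulerK_pos_of_mem_Ioo ⟨hs, hlt⟩
    · rw [eulerK_eq_inv_sq_mul_eulerK_inv]
      exact mul_pos (by positivity) (eulerK_pos_of_mem_Ioo (inv_mem_Ioo_of_one_lt hgt))
  · rw [eulerK_eq_inv_sq_mul_eulerK_inv a, eulerK_eq_inv_sq_mul_eulerK_inv b]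
    exact strictMonoOn_sq_mul_eulerK (inv_mem_Ioo_of_one_lt hb) (inv_mem_Ioo_of_one_lt ha)
      ((inv_lt_inv₀ (zero_lt_one.trans hb) (zero_lt_one.trans ha)).2 hab)
end

section
/- There exist universal constants C₀ ≥ 0 and C₁ > 0 such that: for any 0 < x₁ and x₂ with 8x₁ ≤ x₂ ≤ 1, and any measurable ω : (0,1] → [0,1] with ω(y) = 1 for y ∈ [x₁, x₂], one has ∫_0^1 [K(x₁/y) − K(x₂/y)] (ω(y)/y) dy ≥ C₁ (log(x₂/x₁) − C₀), where K(s) = (1/s) log|(s+1)/(s−1)|. -/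
open MeasureTheory Set intervalIntegral

/-!
Write `F x y := K (x / y) / y = x⁻¹ log |(y + x) / (y - x)|` (`scaledEulerK`), so that the
integral is `∫₀¹ ω (F x₁ - F x₂)`. For `y < x₁` the integrand is nonnegative, because `F · y` decreases on
`(y, ∞)`. For `y > x₁` it is at least `2 / y - F x₂ y`: on `[x₁, x₂]` since `ω = 1` and
`F x₁ y ≥ 2 / y`, beyond `x₂` since `ω F x₁ + (1 - ω) F x₂` is a convex combination of two
numbers `≥ 2 / y`; here `F x y ≥ 2 / y` for `x < y` is `log ((1 + t) / (1 - t)) ≥ 2 t`.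
Finally `∫_{x₁}^1 2 / y = - 2 log x₁`, and integrating `log` explicitly gives
`∫₀¹ F x₂ ≤ 3 - 2 log x₂`, so the integral is at least `2 (log (x₂ / x₁) - 3 / 2)`.
-/

open Real

noncomputable def scaledEulerK (x y : ℝ) : ℝ := x⁻¹ * log |(y + x) / (y - x)|

theorem eulerK_div_div (x y : ℝ) : eulerK (x / y) / y = scaledEulerK x y := by
  rcases eq_or_ne x 0 with rfl | hx
  · simp [eulerK, scaledEulerK]
  rcases eq_or_ne y 0 with rfl | hy
  · simp [scaledEulerK, div_neg, div_self hx]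
  rw [eulerK, scaledEulerK, div_add_one hy, div_sub_one hy, div_div_div_cancel_right₀ hy,
    abs_div, abs_div, abs_sub_comm, add_comm]
  field_simp

theorem two_mul_le_log_one_add_div_one_sub {t : ℝ} (h0 : 0 ≤ t) (h1 : t < 1) :
    2 * t ≤ log ((1 + t) / (1 - t)) := by
  rw [log_div (by linarith) (by linarith)]
  have hsum := hasSum_log_sub_log_of_abs_lt_one (abs_lt.2 ⟨by linarith, h1⟩)
  simpa using le_hasSum hsum 0 fun k _ => by positivity

theorem scaledEulerK_nonneg {x y : ℝ} (hx : 0 < x) (hy : 0 ≤ y) : 0 ≤ scaledEulerK x y := by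
  rcases eq_or_ne y x with rfl | h
  · simp [scaledEulerK]
  refine mul_nonneg (inv_nonneg.2 hx.le) (log_nonneg ?_)
  rw [abs_div, le_div_iff₀ (abs_pos.2 (sub_ne_zero.2 h)), one_mul,
    abs_of_nonneg (a := y + x) (by linarith)]
  exact abs_le.2 ⟨by linarith, by linarith⟩

theorem two_div_le_scaledEulerK {x y : ℝ} (hx : 0 < x) (hxy : x < y) :
    2 / y ≤ scaledEulerK x y := by
  have hy : 0 < y := hx.trans hxy
  have hlog := two_mul_le_log_one_add_div_one_sub (div_nonneg hx.le hy.le) ((div_lt_one hy).2 hxy)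
  have hquot : (1 + x / y) / (1 - x / y) = (y + x) / (y - x) := by
    field_simp
  rw [hquot] at hlog
  rw [scaledEulerK, abs_of_pos (div_pos (by linarith) (by linarith)), ← div_eq_inv_mul,
    le_div_iff₀ hx]
  calc 2 / y * x = 2 * (x / y) := by ring
    _ ≤ _ := hlog

theorem scaledEulerK_antitoneOn {y : ℝ} (hy : 0 ≤ y) :
    AntitoneOn (fun x => scaledEulerK x y) (Ioi y) := by
  intro x₁ hyx x₂ _ hx
  simp only [mem_Ioi] at hyx
  show scaledEulerK x₂ y ≤ scaledEulerK x₁ y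
  have habs : ∀ x, y < x → |(y + x) / (y - x)| = (y + x) / (x - y) := fun x hxy => by
    rw [abs_div, abs_of_nonneg (by linarith), abs_of_neg (by linarith), neg_sub]
  rw [scaledEulerK, scaledEulerK, habs x₁ hyx, habs x₂ (hyx.trans_le hx)]
  have hlog : log ((y + x₂) / (x₂ - y)) ≤ log ((y + x₁) / (x₁ - y)) := by
    apply log_le_log (div_pos (by linarith) (by linarith))
    rw [div_le_div_iff₀ (by linarith) (by linarith)]
    nlinarith
  refine mul_le_mul (inv_anti₀ (by linarith) hx) hlog (log_nonneg ?_) (inv_nonneg.2 (by linarith))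
  rw [le_div_iff₀ (by linarith)]
  linarith

theorem scaledEulerK_ae_eq (x : ℝ) :
    (fun y => x⁻¹ * (log (y + x) - log (y - x))) =ᵐ[volume] scaledEulerK x := by
  filter_upwards [volume.ae_ne x, volume.ae_ne (-x)] with y hyx hyx'
  rw [scaledEulerK, log_abs, log_div (fun h => hyx' (by linarith)) (sub_ne_zero.2 hyx)]

theorem intervalIntegrable_log_add (c a b : ℝ) :
    IntervalIntegrable (fun y => log (y + c)) volume a b := by
  simpa using (intervalIntegrable_log' (a := a + c) (b := b + c)).comp_add_right c

theorem intervalIntegrable_scaledEulerK (x a b : ℝ) :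
    IntervalIntegrable (scaledEulerK x) volume a b := by
  have h := ((intervalIntegrable_log_add x a b).sub
    (intervalIntegrable_log_add (-x) a b)).const_mul x⁻¹
  simp only [← sub_eq_add_neg] at h
  exact h.congr_ae (ae_restrict_of_ae (scaledEulerK_ae_eq x))

theorem integral_scaledEulerK (x : ℝ) :
    ∫ y in (0:ℝ)..1, scaledEulerK x y =
      x⁻¹ * ((1 + x) * log (1 + x) - 2 * (x * log x) - (1 - x) * log (1 - x)) := by
  have hsub : ∀ y, log (y - x) = log (y + -x) := fun y => by rw [sub_eq_add_neg]
  rw [← integral_congr_ae ((scaledEulerK_ae_eq x).mono fun y hy _ => hy),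
    intervalIntegral.integral_const_mul]
  simp_rw [hsub]
  rw [integral_sub (intervalIntegrable_log_add _ _ _) (intervalIntegrable_log_add _ _ _),
    integral_comp_add_right (fun y => log y), integral_comp_add_right (fun y => log y),
    integral_log, integral_log]
  simp only [zero_add, log_neg_eq_log]
  ring

theorem integral_scaledEulerK_le {x : ℝ} (hx : 0 < x) (hx₁ : x ≤ 1) :
    ∫ y in (0:ℝ)..1, scaledEulerK x y ≤ 3 - 2 * log x := by
  have h₁ : (1 + x) * log (1 + x) ≤ 2 * x := by
    have := log_le_sub_one_of_pos (by linarith : 0 < 1 + x)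
    have := log_nonneg (by linarith : 1 ≤ 1 + x)
    nlinarith
  have h₂ := self_sub_one_le_mul_log (by linarith : 0 ≤ 1 - x)
  rw [integral_scaledEulerK, ← div_eq_inv_mul, div_le_iff₀ hx]
  linarith

theorem two_div_sub_le_mul_sub_scaledEulerK {x₁ x₂ y w : ℝ} (hx₁ : 0 < x₁) (hx₂ : 0 < x₂)
    (hy : x₁ < y) (hw : w ∈ Icc 0 1) (hw₁ : y ≤ x₂ → w = 1) :
    2 / y - scaledEulerK x₂ y ≤ w * (scaledEulerK x₁ y - scaledEulerK x₂ y) := by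
  have h₁ := two_div_le_scaledEulerK hx₁ hy
  rcases le_or_gt y x₂ with hyx₂ | hyx₂
  · rw [hw₁ hyx₂]
    linarith
  · have h₂ := two_div_le_scaledEulerK hx₂ hyx₂
    nlinarith [hw.1, hw.2]

theorem intervalIntegrable_const_div (c : ℝ) {a b : ℝ} (ha : 0 < a) (hab : a ≤ b) :
    IntervalIntegrable (fun y => c / y) volume a b :=
  (continuousOn_const.div continuousOn_id fun _ hy =>
    (ha.trans_le (uIcc_of_le hab ▸ hy).1).ne').intervalIntegrable

theorem le_integral_two_div_sub_scaledEulerK {x₁ x₂ : ℝ} (hx₁ : 0 < x₁) (h : x₁ ≤ x₂)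
    (hx₂ : x₂ ≤ 1) :
    2 * (log (x₂ / x₁) - 3 / 2) ≤ ∫ y in x₁..1, (2 / y - scaledEulerK x₂ y) := by
  have hx₂0 : 0 < x₂ := hx₁.trans_le h
  have hinv : ∫ y in x₁..1, 2 / y = 2 * log x₁⁻¹ := by
    have h0 : (0:ℝ) ∉ uIcc x₁ 1 := fun h0 => hx₁.not_ge (uIcc_of_le (h.trans hx₂) ▸ h0).1
    simp_rw [div_eq_mul_inv (2:ℝ), intervalIntegral.integral_const_mul, integral_inv h0, one_div]
  have hhead : 0 ≤ ∫ y in (0:ℝ)..x₁, scaledEulerK x₂ y :=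
    integral_nonneg hx₁.le fun y hy => scaledEulerK_nonneg hx₂0 hy.1
  have hsplit := integral_add_adjacent_intervals (intervalIntegrable_scaledEulerK x₂ 0 x₁)
    (intervalIntegrable_scaledEulerK x₂ x₁ 1)
  rw [integral_sub (intervalIntegrable_const_div 2 hx₁ (h.trans hx₂))
    (intervalIntegrable_scaledEulerK x₂ x₁ 1), hinv, log_inv, log_div hx₂0.ne' hx₁.ne']
  linarith [integral_scaledEulerK_le hx₂0 hx₂]

theorem le_integral_mul_sub_scaledEulerK {x₁ x₂ : ℝ} {ω : ℝ → ℝ} (hx₁ : 0 < x₁) (h12 : x₁ ≤ x₂)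
    (hx₂ : x₂ ≤ 1) (hω : AEStronglyMeasurable ω) (hω01 : ∀ y ∈ Ioc (0:ℝ) 1, ω y ∈ Icc (0:ℝ) 1)
    (hω1 : ∀ y ∈ Icc x₁ x₂, ω y = 1) :
    2 * (log (x₂ / x₁) - 3 / 2) ≤
      ∫ y in (0:ℝ)..1, ω y * (scaledEulerK x₁ y - scaledEulerK x₂ y) := by
  set g := fun y => ω y * (scaledEulerK x₁ y - scaledEulerK x₂ y)
  have hg : IntervalIntegrable g volume 0 1 := by
    refine (intervalIntegrable_iff_integrableOn_Ioc_of_le zero_le_one).2 ?_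
    refine Integrable.bdd_mul (c := 1) ((intervalIntegrable_scaledEulerK x₁ 0 1).sub
      (intervalIntegrable_scaledEulerK x₂ 0 1)).1 hω.restrict ?_
    filter_upwards [ae_restrict_mem measurableSet_Ioc] with y hy
    exact abs_le.2 ⟨by linarith [(hω01 y hy).1], (hω01 y hy).2⟩
  have hx₁1 : x₁ ∈ uIcc 0 1 := mem_uIcc_of_le hx₁.le (h12.trans hx₂)
  have hg₀ := hg.mono_set (uIcc_subset_uIcc left_mem_uIcc hx₁1)
  have hg₁ := hg.mono_set (uIcc_subset_uIcc hx₁1 right_mem_uIcc)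
  have hhead : 0 ≤ ∫ y in (0:ℝ)..x₁, g y := by
    simpa using integral_mono_on_of_le_Ioo hx₁.le intervalIntegrable_const hg₀ fun y hy =>
      mul_nonneg (hω01 y ⟨hy.1, by linarith [hy.2]⟩).1
        (sub_nonneg.2 (scaledEulerK_antitoneOn hy.1.le hy.2 (hy.2.trans_le h12) h12))
  have htail : ∫ y in x₁..1, (2 / y - scaledEulerK x₂ y) ≤ ∫ y in x₁..1, g y :=
    integral_mono_on_of_le_Ioo (h12.trans hx₂) ((intervalIntegrable_const_div 2 hx₁
      (h12.trans hx₂)).sub (intervalIntegrable_scaledEulerK x₂ x₁ 1)) hg₁ fun y hy =>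
        two_div_sub_le_mul_sub_scaledEulerK hx₁ (hx₁.trans_le h12) hy.1
          (hω01 y ⟨hx₁.trans hy.1, hy.2.le⟩) fun hyx₂ => hω1 y ⟨hy.1.le, hyx₂⟩
  rw [← integral_add_adjacent_intervals hg₀ hg₁]
  linarith [le_integral_two_div_sub_scaledEulerK hx₁ h12 hx₂]

/-- Key kernel estimate (Lemma 2.5) driving double-exponential gradient growth. -/
theorem key_kernel_estimate :
    ∃ C₀ C₁ : ℝ, 0 ≤ C₀ ∧ 0 < C₁ ∧
      ∀ (x₁ x₂ : ℝ) (ω : ℝ → ℝ),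
        0 < x₁ → 8 * x₁ ≤ x₂ → x₂ ≤ 1 → Measurable ω →
        (∀ y ∈ Ioc (0:ℝ) 1, ω y ∈ Icc (0:ℝ) 1) →
        (∀ y ∈ Icc x₁ x₂, ω y = 1) →
        C₁ * (Real.log (x₂ / x₁) - C₀) ≤
          ∫ y in (0:ℝ)..1, (eulerK (x₁ / y) - eulerK (x₂ / y)) * (ω y / y) := by
  refine ⟨3 / 2, 2, by norm_num, two_pos, fun x₁ x₂ ω hx₁ h8 hx₂ hω hω01 hω1 => ?_⟩
  have hintegrand : (fun y => (eulerK (x₁ / y) - eulerK (x₂ / y)) * (ω y / y)) =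
      fun y => ω y * (scaledEulerK x₁ y - scaledEulerK x₂ y) := by
    funext y
    simp only [← eulerK_div_div]
    ring
  rw [hintegrand]
  exact le_integral_mul_sub_scaledEulerK hx₁ (by linarith) hx₂ hω.aestronglyMeasurable hω01 hω1
end

section
/- Suppose r : [0,∞) → [8,∞) is differentiable and satisfies r'(t) ≥ C₁ r(t)(log r(t) − C₀) for all t, with log r(0) ≥ 2C₀. Then log r(t) ≥ log r(0) · exp((C₁/2) t) for all t ≥ 0. -/
/-! With `M = log r - C₀` the inequality reads `M' ≥ C₁ M`, so `M(t) ≥ M(0) e^{C₁ t}`.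
Writing `x = e^{C₁ t / 2} ≥ 1`, this gives `log r(t) ≥ C₀ + (log r(0) - C₀) x²`, and the
right-hand side exceeds `log r(0) · x` because the difference factors as
`(x - 1) ((log r(0) - C₀) x - C₀)`, with second factor at least `log r(0) - 2C₀ ≥ 0`. -/

open Real Set

theorem mul_exp_le_of_hasDerivAt_of_mul_le {f f' : ℝ → ℝ} {K a : ℝ}
    (hf : ∀ t ∈ Ici a, HasDerivAt f (f' t) t) (hK : ∀ t ∈ Ici a, K * f t ≤ f' t)
    {t : ℝ} (ht : a ≤ t) : f a * exp (K * (t - a)) ≤ f t := by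
  set g : ℝ → ℝ := fun s => f s * exp (-K * (s - a))
  have hg : ∀ s ∈ Ici a, HasDerivAt g ((f' s - K * f s) * exp (-K * (s - a))) s := by
    intro s hs
    have hexp := (((hasDerivAt_id' s).sub_const a).const_mul (-K)).exp
    exact ((hf s hs).mul hexp).congr_deriv (by ring)
  have hmono : MonotoneOn g (Ici a) := by
    refine monotoneOn_of_hasDerivWithinAt_nonneg (convex_Ici a)
      (fun s hs => (hg s hs).continuousAt.continuousWithinAt)
      (fun s hs => (hg s (interior_subset hs)).hasDerivWithinAt) fun s hs => ?_
    exact mul_nonneg (sub_nonneg.2 (hK s (interior_subset hs))) (exp_pos _).le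
  have hga : g a ≤ g t := hmono self_mem_Ici ht ht
  simp only [g, sub_self, mul_zero, exp_zero, mul_one] at hga
  calc f a * exp (K * (t - a)) ≤ f t * exp (-K * (t - a)) * exp (K * (t - a)) := by gcongr
    _ = f t := by rw [mul_assoc, ← exp_add, neg_mul, neg_add_cancel, exp_zero, mul_one]

theorem mul_le_add_sub_mul_sq {a c x : ℝ} (ha : 0 ≤ a) (hc : 2 * c ≤ a) (hx : 1 ≤ x) :
    a * x ≤ c + (a - c) * x ^ 2 := by
  have hfactor : 0 ≤ (a - c) * x - c := by nlinarith
  nlinarith [mul_nonneg (sub_nonneg.2 hx) hfactor]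

theorem double_exp_growth_ode_general (C₀ C₁ : ℝ) (hC₁ : 0 < C₁)
    (r : ℝ → ℝ) (hr : ∀ t ≥ (0:ℝ), 8 ≤ r t) (hdiff : Differentiable ℝ r)
    (hineq : ∀ t ≥ (0:ℝ), C₁ * (r t * (Real.log (r t) - C₀)) ≤ deriv r t)
    (h0 : 2 * C₀ ≤ Real.log (r 0)) :
    ∀ t ≥ (0:ℝ), Real.log (r 0) * Real.exp (C₁ / 2 * t) ≤ Real.log (r t) := by
  intro t ht
  have hpos : ∀ s ≥ (0:ℝ), 0 < r s := fun s hs => by linarith [hr s hs]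
  have hderiv : ∀ s ∈ Ici (0:ℝ), HasDerivAt (fun s => log (r s) - C₀) (deriv r s / r s) s :=
    fun s hs => ((hdiff s).hasDerivAt.log (hpos s hs).ne').sub_const C₀
  have hlin : ∀ s ∈ Ici (0:ℝ), C₁ * (log (r s) - C₀) ≤ deriv r s / r s := fun s hs => by
    rw [le_div_iff₀ (hpos s hs), mul_right_comm, mul_assoc]
    exact hineq s hs
  have hgrowth := mul_exp_le_of_hasDerivAt_of_mul_le hderiv hlin ht
  have hx : 1 ≤ exp (C₁ / 2 * t) := one_le_exp (by positivity)
  have hsq : exp (C₁ * (t - 0)) = exp (C₁ / 2 * t) ^ 2 := by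
    rw [← exp_nat_mul]; ring_nf
  have hL0 : 0 ≤ log (r 0) := log_nonneg (by linarith [hr 0 le_rfl])
  rw [hsq] at hgrowth
  linarith [mul_le_add_sub_mul_sq hL0 h0 hx]

/-- The differential inequality `r' ≥ C₁ r (log r − C₀)` with `log r(0) ≥ 2C₀`
implies double-exponential growth of `r`. -/
theorem double_exp_growth_ode (C₀ C₁ : ℝ) (hC₀ : 0 ≤ C₀) (hC₁ : 0 < C₁)
    (r : ℝ → ℝ) (hr : ∀ t ≥ (0:ℝ), 8 ≤ r t) (hdiff : Differentiable ℝ r)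
    (hineq : ∀ t ≥ (0:ℝ), C₁ * (r t * (Real.log (r t) - C₀)) ≤ deriv r t)
    (h0 : 2 * C₀ ≤ Real.log (r 0)) :
    ∀ t ≥ (0:ℝ), Real.log (r 0) * Real.exp (C₁ / 2 * t) ≤ Real.log (r t) :=
  double_exp_growth_ode_general C₀ C₁ hC₁ r hr hdiff hineq h0
end

section
/- For every γ ∈ (0,1) there exist M > 2 and c > 0 (depending only on γ) such that: for any odd measurable ω with 0 ≤ ω ≤ 1 on (0,∞), ω = 1 on [x₁, x₂], and M x₁ ≤ x₂, the velocity u(x₁) = −∫_0^∞ (|y−x₁|^{−γ} − |y+x₁|^{−γ}) ω(y) dy satisfies u(x₁) ≤ −c x₁^{1−γ}. -/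
open MeasureTheory Set

/-!
Since `|y - x| ≤ y + x` for `y > 0`, the kernel `|y - x|^(-γ) - |y + x|^(-γ)` is nonnegative on
`(0, ∞)`, so for `0 ≤ ω ≤ 1` the integral is at least its part over `[2x₁, 3x₁] ⊆ [x₁, x₂]`
(taking `M = 3`). There `ω = 1` and the kernel is at least `(2^(-γ) - 3^(-γ)) x₁^(-γ)`, which
gives `c = 2^(-γ) - 3^(-γ)`. The integral is finite because the singularity `|y - x₁|^(-γ)` is
integrable for `γ < 1`, and the kernel decays like `y^(-γ-1)` at infinity by the mean value theorem.
-/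

lemma rpow_neg_sub_rpow_neg_le {γ a b : ℝ} (hγ : 0 ≤ γ) (ha : 0 < a) (hab : a ≤ b) :
    a ^ (-γ) - b ^ (-γ) ≤ γ * a ^ (-γ - 1) * (b - a) := by
  rcases hab.eq_or_lt with rfl | hab
  · simp
  obtain ⟨c, hc, hslope⟩ := exists_hasDerivAt_eq_slope (fun t : ℝ => t ^ (-γ))
    (fun t => -γ * t ^ (-γ - 1)) hab
    (continuousOn_id.rpow_const fun t ht => Or.inl (ha.trans_le ht.1).ne')
    (fun t ht => Real.hasDerivAt_rpow_const (Or.inl (ha.trans ht.1).ne'))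
  have hc_le : c ^ (-γ - 1) ≤ a ^ (-γ - 1) :=
    Real.rpow_le_rpow_of_nonpos ha hc.1.le (by linarith)
  rw [eq_div_iff (sub_pos.2 hab).ne'] at hslope
  nlinarith [mul_le_mul_of_nonneg_left hc_le hγ]

lemma locallyIntegrable_abs_sub_rpow_neg {γ : ℝ} (hγ : γ < 1) (c : ℝ) :
    LocallyIntegrable (fun y : ℝ => |y - c| ^ (-γ)) := by
  have h : LocallyIntegrable (fun t : ℝ => |t| ^ (-γ)) :=
    locallyIntegrable_of_norm_le_rpow (C := 1) (by simp) (by simpa using hγ)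
      (ae_of_all _ fun t => by simp [abs_of_nonneg (Real.rpow_nonneg (abs_nonneg t) _)])
      (continuous_abs.measurable.pow_const _).aestronglyMeasurable
  rw [← (measurePreserving_sub_right volume c).map_eq] at h
  exact (locallyIntegrable_map_homeomorph (Homeomorph.subRight c)).1 h

lemma integrableOn_Ioi_sub_rpow {p a c : ℝ} (hp : p < -1) (hac : a < c) :
    IntegrableOn (fun y : ℝ => (y - a) ^ p) (Ioi c) := by
  have h := integrableOn_Ioi_rpow_of_lt hp (sub_pos.2 hac)
  rw [← (measurePreserving_sub_right volume a).integrableOn_comp_preimage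
    (measurableEmbedding_subRight a), preimage_sub_const_Ioi, sub_add_cancel] at h
  exact h

/-- For odd `ω`, `∫ |y - x|^(-γ) ω y` over `ℝ` equals `∫ oddRieszKernel γ x y * ω y`
over `(0, ∞)`. -/
noncomputable def oddRieszKernel (γ x y : ℝ) : ℝ := |y - x| ^ (-γ) - |y + x| ^ (-γ)

section oddRieszKernel

variable {γ x y : ℝ}

/-- At `y = x` the kernel is negative, since `0 ^ (-γ) = 0` in Lean. -/
lemma oddRieszKernel_nonneg (hγ : 0 ≤ γ) (hx : 0 < x) (hy : 0 < y) (hyx : y ≠ x) :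
    0 ≤ oddRieszKernel γ x y := by
  have hle : |y - x| ≤ |y + x| := by
    rw [abs_of_pos (by linarith : 0 < y + x)]
    exact abs_sub_le_iff.2 ⟨by linarith, by linarith⟩
  exact sub_nonneg.2
    (Real.rpow_le_rpow_of_nonpos (abs_pos.2 (sub_ne_zero.2 hyx)) hle (by linarith))

lemma oddRieszKernel_le (hγ : 0 ≤ γ) (hx : 0 ≤ x) (hxy : x < y) :
    oddRieszKernel γ x y ≤ 2 * γ * x * (y - x) ^ (-γ - 1) := by
  have h := rpow_neg_sub_rpow_neg_le hγ (sub_pos.2 hxy) (by linarith : y - x ≤ y + x)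
  rw [oddRieszKernel, abs_of_pos (sub_pos.2 hxy), abs_of_pos (by linarith : 0 < y + x)]
  linarith

lemma le_oddRieszKernel (hγ : 0 ≤ γ) (hx : 0 < x) (hy : y ∈ Icc (2 * x) (3 * x)) :
    (2 ^ (-γ) - 3 ^ (-γ)) * x ^ (-γ) ≤ oddRieszKernel γ x y := by
  obtain ⟨hy₂, hy₃⟩ := hy
  rw [oddRieszKernel, abs_of_pos (by linarith : 0 < y - x), abs_of_pos (by linarith : 0 < y + x),
    sub_mul, ← Real.mul_rpow (by norm_num) hx.le, ← Real.mul_rpow (by norm_num) hx.le]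
  gcongr ?_ - ?_ <;> exact Real.rpow_le_rpow_of_nonpos (by linarith) (by linarith) (by linarith)

lemma locallyIntegrable_oddRieszKernel (hγ : γ < 1) (x : ℝ) :
    LocallyIntegrable (oddRieszKernel γ x) := by
  have h := (locallyIntegrable_abs_sub_rpow_neg hγ x).sub
    (locallyIntegrable_abs_sub_rpow_neg hγ (-x))
  simp only [sub_neg_eq_add] at h
  exact h

lemma integrableOn_oddRieszKernel (hγ₀ : 0 < γ) (hγ₁ : γ < 1) (hx : 0 < x) :
    IntegrableOn (oddRieszKernel γ x) (Ioi 0) := by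
  have hloc := locallyIntegrable_oddRieszKernel hγ₁ x
  have hnear : IntegrableOn (oddRieszKernel γ x) (Icc 0 (2 * x)) :=
    hloc.integrableOn_isCompact isCompact_Icc
  have hfar : IntegrableOn (oddRieszKernel γ x) (Ioi (2 * x)) := by
    refine ((integrableOn_Ioi_sub_rpow (p := -γ - 1) (by linarith) (by linarith)).const_mul
      (2 * γ * x)).mono' ?_ ?_
    · exact hloc.aestronglyMeasurable.restrict
    · filter_upwards [ae_restrict_mem measurableSet_Ioi] with y (hy : 2 * x < y)
      rw [Real.norm_of_nonneg (oddRieszKernel_nonneg hγ₀.le hx (by linarith) (by linarith))]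
      exact oddRieszKernel_le hγ₀.le hx.le (by linarith)
  exact (hnear.union hfar).mono_set fun y hy => by
    rcases le_or_gt y (2 * x) with h | h
    exacts [Or.inl ⟨le_of_lt hy, h⟩, Or.inr h]

lemma le_setIntegral_oddRieszKernel_mul {ω : ℝ → ℝ} (hγ₀ : 0 < γ) (hγ₁ : γ < 1)
    (hx : 0 < x) (hω : Measurable ω) (hω01 : ∀ y, 0 < y → ω y ∈ Icc 0 1)
    (hω1 : ∀ y ∈ Icc (2 * x) (3 * x), ω y = 1) :
    (2 ^ (-γ) - 3 ^ (-γ)) * x ^ (1 - γ) ≤ ∫ y in Ioi 0, oddRieszKernel γ x y * ω y := by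
  have hint : IntegrableOn (fun y => oddRieszKernel γ x y * ω y) (Ioi 0) := by
    refine (integrableOn_oddRieszKernel hγ₀ hγ₁ hx).mul_bdd (c := 1)
      hω.aestronglyMeasurable.restrict ?_
    filter_upwards [ae_restrict_mem measurableSet_Ioi] with y hy
    obtain ⟨h0, h1⟩ := hω01 y hy
    rwa [Real.norm_of_nonneg h0]
  have hnonneg : 0 ≤ᵐ[volume.restrict (Ioi 0)] fun y => oddRieszKernel γ x y * ω y := by
    filter_upwards [ae_restrict_mem measurableSet_Ioi, Measure.ae_ne _ x] with y hy hyx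
    exact mul_nonneg (oddRieszKernel_nonneg hγ₀.le hx hy hyx) (hω01 y hy).1
  have hpatch : Icc (2 * x) (3 * x) ⊆ Ioi 0 := fun y hy => by
    simp only [mem_Ioi]; linarith [hy.1]
  calc (2 ^ (-γ) - 3 ^ (-γ)) * x ^ (1 - γ)
      = (2 ^ (-γ) - 3 ^ (-γ)) * x ^ (-γ) * volume.real (Icc (2 * x) (3 * x)) := by
        rw [Real.volume_real_Icc_of_le (by linarith), sub_eq_neg_add 1 γ,
          Real.rpow_add_one hx.ne']
        ring
    _ ≤ ∫ y in Icc (2 * x) (3 * x), oddRieszKernel γ x y * ω y :=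
        setIntegral_ge_of_const_le_real measurableSet_Icc measure_Icc_lt_top.ne
          (fun y hy => by rw [hω1 y hy, mul_one]; exact le_oddRieszKernel hγ₀.le hx hy)
          (hint.mono_set hpatch)
    _ ≤ ∫ y in Ioi 0, oddRieszKernel γ x y * ω y :=
        setIntegral_mono_set hint hnonneg hpatch.eventuallyLE

end oddRieszKernel

/-- Key velocity estimate (Lemma 3.3) for the 1D α-patch model: the velocity at
`x₁` is bounded above by `−c x₁^{1−γ}`. -/
theorem patch_velocity_estimate (γ : ℝ) (hγ : 0 < γ) (hγ1 : γ < 1) :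
    ∃ M c : ℝ, 2 < M ∧ 0 < c ∧
      ∀ (ω : ℝ → ℝ) (x₁ x₂ : ℝ),
        Measurable ω → (∀ y, ω (-y) = -ω y) →
        (∀ y : ℝ, 0 < y → ω y ∈ Icc (0:ℝ) 1) →
        (∀ y ∈ Icc x₁ x₂, ω y = 1) →
        0 < x₁ → M * x₁ ≤ x₂ →
        (-∫ y in Ioi (0:ℝ), (|y - x₁| ^ (-γ) - |y + x₁| ^ (-γ)) * ω y) ≤
          -c * x₁ ^ (1 - γ) := by
  refine ⟨3, 2 ^ (-γ) - 3 ^ (-γ), by norm_num,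
    sub_pos.2 (Real.rpow_lt_rpow_of_neg (by norm_num) (by norm_num) (by linarith)), ?_⟩
  intro ω x₁ x₂ hω _ hω01 hpatch hx₁ hx₂
  have hbound := le_setIntegral_oddRieszKernel_mul hγ hγ1 hx₁ hω hω01
    fun y hy => hpatch y ⟨by linarith [hy.1], by linarith [hy.2]⟩
  rw [neg_mul, neg_le_neg_iff]
  exact hbound
end
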